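/- (Which of the two candidate strategies is optimal depends on the payoff structure and the number of arrival times.) Suppose u is uniform with values A > B > C. Then the all-office profile has strictly greater expected utility over the subgame T1 than the cut-off profile with cut-off N if and only if (N − kmin)·B > (N − 1 − kmin)·A + C. -/

import Mathlib

/-- The two actions: `c` (canteen) and `o` (office). -/
inductive Act : Type
  | c : Act
  | o : Act
deriving DecidableEq

open Act

/-- The set of arrival pairs
`T = {(k, k+1) : kmin ≤ k ≤ kmax - 1} ∪ {(k, k-1) : kmin + 1 ≤ k ≤ kmax}`. -/
noncomputable def T (kmin kmax : ℤ) : Finset (ℤ × ℤ) :=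
  ((Finset.Icc kmin (kmax - 1)).image (fun k => (k, k + 1))) ∪
  ((Finset.Icc (kmin + 1) kmax).image (fun k => (k, k - 1)))

/-- Subgame `T1 = {(t1,t2) ∈ T : t1 ≡ kmin (mod 2)}`. -/
noncomputable def T1 (kmin kmax : ℤ) : Finset (ℤ × ℤ) :=
  (T kmin kmax).filter (fun t => t.1 % 2 = kmin % 2)

/-- Subgame `T2 = {(t1,t2) ∈ T : t2 ≡ kmin (mod 2)}`. -/
noncomputable def T2 (kmin kmax : ℤ) : Finset (ℤ × ℤ) :=
  (T kmin kmax).filter (fun t => t.2 % 2 = kmin % 2)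

/-- The expected utility of profile `s` over a set `S` of arrival pairs:
`EU_S(s) = (1/|S|) · Σ_{(t1,t2) ∈ S} u_{(t1,t2)}(s_1(t1), s_2(t2))`. -/
noncomputable def EU (u : ℤ × ℤ → Act → Act → ℝ) (s : (ℤ → Act) × (ℤ → Act))
    (S : Finset (ℤ × ℤ)) : ℝ :=
  (∑ t ∈ S, u t (s.1 t.1) (s.2 t.2)) / S.card

/-- `s` is Pareto optimal over `S` if no profile `s'` has `EU_S(s') > EU_S(s)`. -/
def ParetoOptimal (u : ℤ × ℤ → Act → Act → ℝ) (S : Finset (ℤ × ℤ))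
    (s : (ℤ → Act) × (ℤ → Act)) : Prop :=
  ¬ ∃ s' : (ℤ → Act) × (ℤ → Act), EU u s' S > EU u s S

/-- `u` satisfies conditions (U1) and (U2) on the arrival pairs of `T`. -/
def SatisfiesU1U2 (kmin kmax N : ℤ) (u : ℤ × ℤ → Act → Act → ℝ) : Prop :=
  ∀ t ∈ T kmin kmax,
    (t.1 < N ∧ t.2 < N →
      u t c c > u t o o ∧ u t o o > u t c o ∧ u t c o = u t o c) ∧
    (N ≤ t.1 ∨ N ≤ t.2 →
      u t o o > u t c o ∧ u t c o = u t o c ∧ u t o c = u t c c)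

/-- `u` is uniform with values `A > B > C` (the order is assumed separately). -/
def Uniform (kmin kmax N : ℤ) (u : ℤ × ℤ → Act → Act → ℝ) (A B C : ℝ) : Prop :=
  ∀ t ∈ T kmin kmax,
    (t.1 < N ∧ t.2 < N →
      u t c c = A ∧ u t o o = B ∧ u t c o = C ∧ u t o c = C) ∧
    (N ≤ t.1 ∨ N ≤ t.2 →
      u t o o = B ∧ u t c c = C ∧ u t c o = C ∧ u t o c = C)

/-- The cut-off strategy with cut-off `m`: canteen iff arriving strictly before `m`. -/
def cutoff (m : ℤ) : ℤ → Act := fun k => if k < m then c else o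

/-- The all-office strategy. -/
def allOffice : ℤ → Act := fun _ => o

/-!
`T1` contains exactly one ordering of each pair `{k, k + 1}` with `kmin ≤ k < kmax`, and both
profiles earn payoffs that are symmetric in the two arrival times, so sums over `T1` become sums
over `k`. The all-office profile earns `B` on each of the `kmax - kmin` pairs; the cut-off profile
earns `A` on the `N - 1 - kmin` pairs before `N`, `C` on `{N - 1, N}` and `B` on the pairs from `N`
on, which cancel in the comparison.
-/

/-- Every pair `{k, k + 1}` of consecutive arrival times lies in `T` in both orders; `T1` keeps
the order whose first entry has the parity of `kmin`. -/
def pairT1 (kmin k : ℤ) : ℤ × ℤ := if k % 2 = kmin % 2 then (k, k + 1) else (k + 1, k)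

lemma pairT1_injective (kmin : ℤ) : Function.Injective (pairT1 kmin) := by
  intro a b h
  unfold pairT1 at h
  split_ifs at h <;> simp only [Prod.ext_iff] at h <;> omega

lemma T1_eq_image_Ico (kmin kmax : ℤ) :
    T1 kmin kmax = (Finset.Ico kmin kmax).image (pairT1 kmin) := by
  ext ⟨a, b⟩
  simp only [T1, T, pairT1, Finset.mem_filter, Finset.mem_union, Finset.mem_image,
    Finset.mem_Icc, Finset.mem_Ico]
  constructor
  · rintro ⟨⟨k, hk, hkab⟩ | ⟨k, hk, hkab⟩, hpar⟩ <;> simp only [Prod.ext_iff] at hkab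
    · exact ⟨k, by omega, by rw [if_pos (by omega)]; simp only [Prod.ext_iff]; omega⟩
    · exact ⟨k - 1, by omega, by rw [if_neg (by omega)]; simp only [Prod.ext_iff]; omega⟩
  · rintro ⟨k, hk, hkab⟩
    split_ifs at hkab with hpar <;> simp only [Prod.ext_iff] at hkab
    · exact ⟨Or.inl ⟨k, by omega, by simp only [Prod.ext_iff]; omega⟩, by omega⟩
    · exact ⟨Or.inr ⟨k + 1, by omega, by simp only [Prod.ext_iff]; omega⟩, by omega⟩

lemma sum_T1_of_symm {M : Type*} [AddCommMonoid M] (kmin kmax : ℤ) (f : ℤ × ℤ → M)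
    (hf : ∀ a b, f (a, b) = f (b, a)) :
    ∑ t ∈ T1 kmin kmax, f t = ∑ k ∈ Finset.Ico kmin kmax, f (k, k + 1) := by
  rw [T1_eq_image_Ico, Finset.sum_image fun a _ b _ h => pairT1_injective kmin h]
  refine Finset.sum_congr rfl fun k _ => ?_
  unfold pairT1
  split_ifs
  · rfl
  · exact hf _ _

lemma T1_nonempty {kmin kmax : ℤ} (h : kmin < kmax) : (T1 kmin kmax).Nonempty := by
  rw [T1_eq_image_Ico]
  exact (Finset.nonempty_Ico.2 h).image _

lemma sum_Ico_const_of_le {R : Type*} [Ring R] {a b : ℤ} (h : a ≤ b) (x : R) :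
    ∑ _k ∈ Finset.Ico a b, x = ((b - a : ℤ) : R) * x := by
  rw [Finset.sum_const, Int.card_Ico, nsmul_eq_mul, ← Int.cast_natCast,
    Int.toNat_of_nonneg (by omega)]

lemma sum_Ico_cutoff_payoff {R : Type*} [Ring R] {a b c : ℤ} (hab : a < b) (hbc : b ≤ c)
    (A B C : R) :
    ∑ k ∈ Finset.Ico a c, (if k + 1 < b then A else if k < b then C else B) =
      ((b - 1 - a : ℤ) : R) * A + C + ((c - b : ℤ) : R) * B := by
  rw [← Finset.Ico_union_Ico_eq_Ico (by omega : a ≤ b - 1) (by omega : b - 1 ≤ c),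
    Finset.sum_union (Finset.Ico_disjoint_Ico_consecutive _ _ _),
    ← Finset.Ico_union_Ico_eq_Ico (by omega : b - 1 ≤ b) hbc,
    Finset.sum_union (Finset.Ico_disjoint_Ico_consecutive _ _ _)]
  have before : ∀ k ∈ Finset.Ico a (b - 1),
      (if k + 1 < b then A else if k < b then C else B) = A := fun k hk => by
    rw [Finset.mem_Ico] at hk; rw [if_pos (by omega)]
  have after : ∀ k ∈ Finset.Ico b c,
      (if k + 1 < b then A else if k < b then C else B) = B := fun k hk => by
    rw [Finset.mem_Ico] at hk; rw [if_neg (by omega), if_neg (by omega)]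
  rw [Finset.sum_congr rfl before, Finset.sum_congr rfl after, sum_Ico_const_of_le (by omega),
    sum_Ico_const_of_le hbc, show Finset.Ico (b - 1) b = {b - 1} by ext; simp only [Finset.mem_Ico, Finset.mem_singleton]; omega,
    Finset.sum_singleton, if_neg (by omega), if_pos (by omega), ← add_assoc]

lemma Uniform.payoff_oo {kmin kmax N : ℤ} {u : ℤ × ℤ → Act → Act → ℝ} {A B C : ℝ}
    (hu : Uniform kmin kmax N u A B C) {t : ℤ × ℤ} (ht : t ∈ T kmin kmax) : u t o o = B := by
  by_cases h : t.1 < N ∧ t.2 < N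
  · exact ((hu t ht).1 h).2.1
  · exact ((hu t ht).2 (by omega)).1

lemma Uniform.payoff_cutoff {kmin kmax N : ℤ} {u : ℤ × ℤ → Act → Act → ℝ} {A B C : ℝ}
    (hu : Uniform kmin kmax N u A B C) {t : ℤ × ℤ} (ht : t ∈ T kmin kmax) :
    u t (cutoff N t.1) (cutoff N t.2) =
      if max t.1 t.2 < N then A else if min t.1 t.2 < N then C else B := by
  obtain ⟨before, after⟩ := hu t ht
  rcases lt_or_ge t.1 N with h1 | h1 <;> rcases lt_or_ge t.2 N with h2 | h2
  · simp [cutoff, h1, h2, before ⟨h1, h2⟩]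
  · simp [cutoff, h1, after (Or.inr h2), not_lt.2 h2]
  · simp [cutoff, h2, after (Or.inl h1), not_lt.2 h1]
  · simp [cutoff, after (Or.inl h1), not_lt.2 h1, not_lt.2 h2]

theorem stmt_11_general (kmin kmax N : ℤ) (h1 : kmin < N) (h2 : N ≤ kmax)
    (A B C : ℝ)
    (u : ℤ × ℤ → Act → Act → ℝ) (hu : Uniform kmin kmax N u A B C) :
    EU u (allOffice, allOffice) (T1 kmin kmax) >
        EU u (cutoff N, cutoff N) (T1 kmin kmax) ↔
      ((N - kmin : ℤ) : ℝ) * B > ((N - 1 - kmin : ℤ) : ℝ) * A + C := by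
  have hT : ∀ t ∈ T1 kmin kmax, t ∈ T kmin kmax := fun t ht => (Finset.mem_filter.1 ht).1
  have office : ∑ t ∈ T1 kmin kmax, u t o o = ((kmax - kmin : ℤ) : ℝ) * B := by
    rw [Finset.sum_congr rfl fun t ht => hu.payoff_oo (hT t ht),
      sum_T1_of_symm _ _ (fun _ => B) fun _ _ => rfl, sum_Ico_const_of_le (by omega)]
  have cut : ∑ t ∈ T1 kmin kmax, u t (cutoff N t.1) (cutoff N t.2) =
      ((N - 1 - kmin : ℤ) : ℝ) * A + C + ((kmax - N : ℤ) : ℝ) * B := by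
    rw [Finset.sum_congr rfl fun t ht => hu.payoff_cutoff (hT t ht),
      sum_T1_of_symm _ _ _ fun a b => by rw [max_comm, min_comm], ← sum_Ico_cutoff_payoff h1 h2]
    refine Finset.sum_congr rfl fun k _ => ?_
    rw [max_eq_right (by omega), min_eq_left (by omega)]
  have hcard : (0 : ℝ) < (T1 kmin kmax).card := by
    exact_mod_cast (T1_nonempty (h1.trans_le h2)).card_pos
  simp only [EU, allOffice]
  rw [office, cut, gt_iff_lt, gt_iff_lt, div_lt_div_iff_of_pos_right hcard]
  push_cast
  constructor <;> intro h <;> linarith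

/-- The all-office profile beats the cut-off profile with cut-off `N`
over `T1` iff `(N - kmin)·B > (N - 1 - kmin)·A + C`. -/
theorem stmt_11 (kmin kmax N : ℤ) (h1 : kmin < N) (h2 : N ≤ kmax)
    (A B C : ℝ) (hAB : A > B) (hBC : B > C)
    (u : ℤ × ℤ → Act → Act → ℝ) (hu : Uniform kmin kmax N u A B C) :
    EU u (allOffice, allOffice) (T1 kmin kmax) >
        EU u (cutoff N, cutoff N) (T1 kmin kmax) ↔
      ((N - kmin : ℤ) : ℝ) * B > ((N - 1 - kmin : ℤ) : ℝ) * A + C :=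
  stmt_11_general kmin kmax N h1 h2 A B C u hu
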